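/- For every pair of positive integers K and M there exists N such that for every finite set V with |V| ≥ N and every function c assigning a value in {0,1} to each K-element subset of V, there is a subset Y ⊆ V with |Y| = M on which c is constant (c(X₁) = c(X₂) for all K-subsets X₁, X₂ of Y). -/
import Mathlib

open Finset

private def gseq (R : ℕ → ℕ) : ℕ → ℕ
  | 0 => 0
  | t + 1 => R (gseq R t) + 1

/-- Inner lemma: build a set `Y` of size `t` on which the colour of each
`(K+1)`-subset depends only on its minimum element. -/
private lemma ramsey_inner (K : ℕ) (R : ℕ → ℕ)
    (hR : ∀ m, ∀ V : Finset ℕ, R m ≤ V.card → ∀ c : Finset ℕ → Bool,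
      ∃ Y ⊆ V, Y.card = m ∧
        ∀ X₁ X₂ : Finset ℕ, X₁ ⊆ Y → X₂ ⊆ Y → X₁.card = K → X₂.card = K →
          c X₁ = c X₂) :
    ∀ t (V : Finset ℕ), gseq R t ≤ V.card → ∀ c : Finset ℕ → Bool,
      ∃ Y ⊆ V, Y.card = t ∧ ∃ e : ℕ → Bool,
        ∀ X ⊆ Y, ∀ v ∈ X, (∀ u ∈ X, v ≤ u) → X.card = K + 1 → c X = e v := by
  intro t
  induction t with
  | zero =>
    intro V _ c
    exact ⟨∅, empty_subset _, card_empty, fun _ => true,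
      fun X hX v hv _ _ => absurd (hX hv) (notMem_empty v)⟩
  | succ t ih =>
    intro V hV c
    have hne : V.Nonempty := by
      rw [← card_pos]
      have : 0 < gseq R (t + 1) := by simp [gseq]
      omega
    set v := V.min' hne with hvdef
    have hvV : v ∈ V := V.min'_mem hne
    have hcardE : R (gseq R t) ≤ (V.erase v).card := by
      rw [card_erase_of_mem hvV]
      have : gseq R (t + 1) = R (gseq R t) + 1 := rfl
      omega
    obtain ⟨A, hAsub, hAcard, hAmono⟩ :=
      hR (gseq R t) (V.erase v) hcardE (fun X => c (insert v X))
    obtain ⟨Y, hYA, hYcard, e, he⟩ := ih A (le_of_eq hAcard.symm) c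
    have hYsubE : Y ⊆ V.erase v := hYA.trans hAsub
    have hvY : v ∉ Y := fun h => (mem_erase.mp (hYsubE h)).1 rfl
    set ε : Bool := if h : ∃ B, B ⊆ A ∧ B.card = K
      then c (insert v h.choose) else true with hεdef
    refine ⟨insert v Y, ?_, ?_, fun w => if w = v then ε else e w, ?_⟩
    · exact insert_subset hvV (hYsubE.trans (erase_subset _ _))
    · rw [card_insert_of_notMem hvY, hYcard]
    · intro X hX w hw hwmin hXcard
      by_cases hwv : w = v
      · -- minimum is v
        have hb : (fun u => if u = v then ε else e u) w = ε := by simp [hwv]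
        rw [hb]
        have hwX : v ∈ X := hwv ▸ hw
        have hXe : X.erase v ⊆ Y := by
          intro u hu
          have := hX (erase_subset _ _ hu)
          rcases mem_insert.mp this with h | h
          · exact absurd h (mem_erase.mp hu).1
          · exact h
        have hXeA : X.erase v ⊆ A := hXe.trans hYA
        have hXecard : (X.erase v).card = K := by
          rw [card_erase_of_mem hwX, hXcard]; omega
        have hex : ∃ B, B ⊆ A ∧ B.card = K := ⟨X.erase v, hXeA, hXecard⟩
        rw [hεdef, dif_pos hex]
        have := hAmono (hex.choose) (X.erase v) hex.choose_spec.1 hXeA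
          hex.choose_spec.2 hXecard
        rw [this, insert_erase hwX]
      · -- minimum is not v, so v ∉ X and X ⊆ Y
        have hvX : v ∉ X := by
          intro hvX
          have h1 : w ≤ v := hwmin v hvX
          have h2 : v ≤ w := by
            have hwV : w ∈ V := by
              rcases mem_insert.mp (hX hw) with h | h
              · exact absurd h hwv
              · exact (erase_subset _ _ (hYsubE h))
            exact V.min'_le w hwV
          exact hwv (le_antisymm h1 h2)
        have hXY : X ⊆ Y := by
          intro u hu
          rcases mem_insert.mp (hX hu) with h | h
          · exact absurd (h ▸ hu) hvX
          · exact h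
        have hb : (fun u => if u = v then ε else e u) w = e w := by simp [hwv]
        rw [hb]
        exact he X hXY w hw hwmin hXcard

private lemma ramsey_general (K : ℕ) : ∀ M : ℕ, ∃ N : ℕ,
    ∀ V : Finset ℕ, N ≤ V.card → ∀ c : Finset ℕ → Bool,
      ∃ Y ⊆ V, Y.card = M ∧
        ∀ X₁ X₂ : Finset ℕ, X₁ ⊆ Y → X₂ ⊆ Y → X₁.card = K → X₂.card = K →
          c X₁ = c X₂ := by
  induction K with
  | zero =>
    intro M
    refine ⟨M, fun V hV c => ?_⟩
    obtain ⟨Y, hY, hYcard⟩ := exists_subset_card_eq hV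
    refine ⟨Y, hY, hYcard, fun X₁ X₂ _ _ h₁ h₂ => ?_⟩
    rw [card_eq_zero.mp h₁, card_eq_zero.mp h₂]
  | succ K ih =>
    intro M
    choose R hR using ih
    refine ⟨gseq R (2 * M), fun V hV c => ?_⟩
    obtain ⟨Y, hYV, hYcard, e, he⟩ := ramsey_inner K R hR (2 * M) V hV c
    have hsplit := card_filter_add_card_filter_not (s := Y)
      (p := fun w => e w = true)
    have hM : M ≤ (Y.filter (fun w => e w = true)).card ∨
        M ≤ (Y.filter (fun w => ¬ (e w = true))).card := by omega
    have key : ∀ (Yb : Finset ℕ) (b : Bool), Yb ⊆ Y →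
        (∀ w ∈ Yb, e w = b) → M ≤ Yb.card →
        ∃ Z ⊆ V, Z.card = M ∧
          ∀ X₁ X₂ : Finset ℕ, X₁ ⊆ Z → X₂ ⊆ Z → X₁.card = K + 1 →
            X₂.card = K + 1 → c X₁ = c X₂ := by
      intro Yb b hYbY hYbcol hYbcard
      obtain ⟨Z, hZYb, hZcard⟩ := exists_subset_card_eq hYbcard
      have hcol : ∀ X : Finset ℕ, X ⊆ Z → X.card = K + 1 → c X = b := by
        intro X hXZ hXc
        have hXne : X.Nonempty := by rw [← card_pos, hXc]; omega
        set w := X.min' hXne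
        have hwX : w ∈ X := X.min'_mem hXne
        have := he X ((hXZ.trans hZYb).trans hYbY) w hwX
          (fun u hu => X.min'_le u hu) hXc
        rw [this, hYbcol w (hZYb (hXZ hwX))]
      exact ⟨Z, (hZYb.trans hYbY).trans hYV, hZcard,
        fun X₁ X₂ h₁ h₂ hc₁ hc₂ => by rw [hcol X₁ h₁ hc₁, hcol X₂ h₂ hc₂]⟩
    rcases hM with h | h
    · exact key (Y.filter (fun w => e w = true)) true (filter_subset _ _)
        (fun w hw => (mem_filter.mp hw).2) h
    · refine key (Y.filter (fun w => ¬ (e w = true))) false (filter_subset _ _)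
        (fun w hw => ?_) h
      have := (mem_filter.mp hw).2
      simpa using this

/-- Finite Ramsey theorem for 2-colourings of `K`-subsets: for all positive `K, M`
there is `N` such that every 2-colouring of the `K`-subsets of any finite set of
size at least `N` admits a monochromatic subset of size `M`. -/
theorem finite_ramsey_two_colours (K M : ℕ) (hK : 0 < K) (hM : 0 < M) :
    ∃ N : ℕ, ∀ (V : Finset ℕ), N ≤ V.card → ∀ c : Finset ℕ → Bool,
      ∃ Y ⊆ V, Y.card = M ∧
        ∀ X₁ X₂ : Finset ℕ, X₁ ⊆ Y → X₂ ⊆ Y → X₁.card = K → X₂.card = K →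
          c X₁ = c X₂ := by
  exact ramsey_general K M
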